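/- For the Streett game Γ_k = (G_k, Ω_k) of the example and its simulating parity game Γ'_k, Algorithm Memory Reduction for Streett games produces a reduced game graph G''_k with only one memory content: since every infinite play on G'_k infinitely often traverses an edge ((s₁,y),(s₂,v₁)) at which the smallest possible color 0 (after the coloring is redefined as c_k := 4k+2 − c_k for the min-parity convention) is visited, the priority memory in the right-hand delayed simulation game is reset to ✓ infinitely often from every vertex; hence Duplicator wins from every vertex of the simulation game graph, all states of the parity game automaton with the same V-component are ≈^rh_de-equivalent, and all memory contents are ≈_S-equivalent, so S/≈_S is a singleton. -/
import Mathlib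

set_option linter.unusedVariables false

namespace Games

/-- A game arena: a directed graph whose vertices are partitioned between
Player 0 (`owner v = false`) and Player 1 (`owner v = true`). -/
structure GameGraph (V : Type*) where
  E : V → V → Prop
  owner : V → Bool

/-- An infinite path through the game graph. -/
def IsPlay {V : Type*} (G : GameGraph V) (ρ : ℕ → V) : Prop :=
  ∀ i, G.E (ρ i) (ρ (i + 1))

/-- A property of positions holds infinitely often. -/
def InfOften (p : ℕ → Prop) : Prop := ∀ n, ∃ m, n ≤ m ∧ p m

/-- The set of elements occurring infinitely often in a sequence. -/
def InfSet {α : Type*} (ρ : ℕ → α) : Set α := {u | InfOften fun i => ρ i = u}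

/-- Game simulation (Definition 1 of the paper): the game `(G, φ)` is simulated by the
game `(G', φ')` on the extended vertex set `S × V` with initial memory content `s0`. -/
structure IsSimulation {V S : Type*} (G : GameGraph V) (φ : (ℕ → V) → Prop)
    (G' : GameGraph (S × V)) (φ' : (ℕ → S × V) → Prop) (s0 : S) : Prop where
  owner_eq : ∀ (s : S) (v : V), G'.owner (s, v) = G.owner v
  edge_lift : ∀ (s : S) (v v' : V), G.E v v' → ∃ s', G'.E (s, v) (s', v')
  mem_unique : ∀ (s : S) (v : V) (p₁ p₂ : S × V), G'.E (s, v) p₁ → G'.E (s, v) p₂ → p₁.1 = p₂.1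
  edge_proj : ∀ (s s' : S) (v v' : V), G'.E (s, v) (s', v') → G.E v v'
  win_iff : ∀ ρ : ℕ → V, IsPlay G ρ → ∀ ρ' : ℕ → S × V,
      ρ' 0 = (s0, ρ 0) → (∀ i, (ρ' i).2 = ρ i) → IsPlay G' ρ' → (φ ρ ↔ φ' ρ')

/-- A play is consistent with the (history-dependent) strategy `f` of Player 0. -/
def StratConsistent {V : Type*} (G : GameGraph V) (f : List V → V → V) (ρ : ℕ → V) : Prop :=
  ∀ i, G.owner (ρ i) = false → ρ (i + 1) = f (List.ofFn fun j : Fin i => ρ j) (ρ i)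

/-- Player 0 has a strategy from `v` forcing every resulting play to satisfy `ψ`. -/
def ForcesFrom {V : Type*} (G : GameGraph V) (ψ : (ℕ → V) → Prop) (v : V) : Prop :=
  ∃ f : List V → V → V, (∀ (h : List V) (u : V), G.owner u = false → G.E u (f h u)) ∧
    ∀ ρ : ℕ → V, ρ 0 = v → IsPlay G ρ → StratConsistent G f ρ → ψ ρ

end Games
namespace Games

/-- State space of a game automaton: the states `S × V` together with
`q₀ = Sum.inr false` and `q_sink = Sum.inr true`. -/
abbrev GA (S V : Type*) := (S × V) ⊕ Bool

/-- The initial state `q₀` of a game automaton. -/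
def gaInit {S V : Type*} : GA S V := Sum.inr false

/-- The sink state `q_sink` of a game automaton. -/
def gaSink {S V : Type*} : GA S V := Sum.inr true

/-- `δ` is the transition function of the (deterministic) game automaton of the
simulating game `Γ' = (G', φ')` (Definition 2 of the paper). -/
structure IsGameAutomaton {V S : Type*} (G : GameGraph V) (G' : GameGraph (S × V)) (s0 : S)
    (δ : GA S V → V → GA S V) : Prop where
  init_step : ∀ v' : V, δ (Sum.inr false) v' = Sum.inl (s0, v')
  sink_step : ∀ v' : V, δ (Sum.inr true) v' = Sum.inr true
  no_edge : ∀ (s : S) (v v' : V), ¬ G.E v v' → δ (Sum.inl (s, v)) v' = Sum.inr true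
  edge : ∀ (s : S) (v v' : V), G.E v v' →
      ∃ s', δ (Sum.inl (s, v)) v' = Sum.inl (s', v') ∧ G'.E (s, v) (s', v')

/-- The unique run of the deterministic automaton `δ` on the word `α`, from state `q`. -/
def gaRun {S V : Type*} (δ : GA S V → V → GA S V) (q : GA S V) (α : ℕ → V) : ℕ → GA S V
  | 0 => q
  | n + 1 => δ (gaRun δ q α n) (α n)

/-- `ρ` is a run of the automaton `δ` (starting at an arbitrary state). -/
def IsRun {S V : Type*} (δ : GA S V → V → GA S V) (ρ : ℕ → GA S V) : Prop :=
  ∀ i, ∃ a, ρ (i + 1) = δ (ρ i) a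

/-- Extension of a relation on `S × V` to the full state set of a game automaton. -/
def ExtRel {S V : Type*} (R : S × V → S × V → Prop) : GA S V → GA S V → Prop
  | Sum.inl p, Sum.inl q => R p q
  | Sum.inr b, Sum.inr b' => b = b'
  | Sum.inl _, Sum.inr _ => False
  | Sum.inr _, Sum.inl _ => False

/-- A run of the game automaton is accepting iff (once the initial state `q₀` is dropped,
if the run starts there) it is a winning play for Player 0 in `Γ' = (G', φ')`. -/
def RunAccepting {S V : Type*} (G' : GameGraph (S × V)) (φ' : (ℕ → S × V) → Prop)
    (ρ : ℕ → GA S V) : Prop :=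
  (∃ σ : ℕ → S × V, (∀ i, ρ i = Sum.inl (σ i)) ∧ IsPlay G' σ ∧ φ' σ) ∨
  (ρ 0 = Sum.inr false ∧
    ∃ σ : ℕ → S × V, (∀ i, ρ (i + 1) = Sum.inl (σ i)) ∧ IsPlay G' σ ∧ φ' σ)

/-- The ω-language of the game automaton `δ` (with acceptance induced by `φ'`). -/
def GALang {S V : Type*} (G' : GameGraph (S × V)) (φ' : (ℕ → S × V) → Prop)
    (δ : GA S V → V → GA S V) : Set (ℕ → V) :=
  {α | RunAccepting G' φ' (gaRun δ gaInit α)}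

end Games
namespace Games

/-- The reward order `⪯` on colors: even colors are better the larger, odd colors are
worse the smaller, and even colors beat odd ones. -/
def rewardLe (m n : ℕ) : Prop :=
  (Even m ∧ Odd n) ∨ (Even m ∧ Even n ∧ m ≤ n) ∨ (Odd m ∧ Odd n ∧ n ≤ m)

/-- The strict reward order `≺`. -/
def rewardLt (m n : ℕ) : Prop := rewardLe m n ∧ m ≠ n

open scoped Classical in
/-- The priority memory update function `pm` (with the correction in case iv),
where `none` plays the role of `✓`. -/
noncomputable def pm (i j : ℕ) : Option ℕ → Option ℕ
  | none => if rewardLt i j then some (min i j) else none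
  | some c =>
    if rewardLt i j then some (min i (min j c))
    else if Odd i ∧ i ≤ c ∧ (Odd j ∨ c < j) then some c
    else if Even j ∧ j ≤ c ∧ (Even i ∨ c < i) then none
    else if Odd i ∧ Even j ∧ i ≤ c ∧ j ≤ c then none
    else some c

/-- Positions of the right-hand delayed simulation game: two automaton states (over
`S × V`) together with the priority memory (`none` = `✓`). -/
abbrev RhPos (S V : Type*) := (S × V) × (S × V) × Option ℕ

/-- The move relation of the right-hand delayed simulation game: both states proceed
under the same letter and the priority memory is updated by `pm`. All positions belong
to Spoiler (the automaton is deterministic, so Duplicator's answers are forced). -/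
def rhEdge {S V : Type*} (Tr : S × V → V → (S × V) → Prop) (c : S × V → ℕ) :
    RhPos S V → RhPos S V → Prop := fun p p' =>
  ∃ a, Tr p.1 a p'.1 ∧ Tr p.2.1 a p'.2.1 ∧ p'.2.2 = pm (c p'.1) (c p'.2.1) p.2.2

/-- Duplicator wins the right-hand delayed simulation game from `p`: since all positions
belong to Spoiler, this means that every infinite play from `p` visits `✓` infinitely
often. -/
def DupWinsRh {S V : Type*} (Tr : S × V → V → (S × V) → Prop) (c : S × V → ℕ)
    (p : RhPos S V) : Prop :=
  ∀ π : ℕ → RhPos S V, π 0 = p → (∀ i, rhEdge Tr c (π i) (π (i + 1))) →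
    InfOften fun i => (π i).2.2 = none

open scoped Classical in
/-- The initial position `p_I(p, q)` of the right-hand delayed simulation game. -/
noncomputable def rhInit {S V : Type*} (c : S × V → ℕ) (p q : S × V) : RhPos S V :=
  if rewardLt (c p) (c q) then (p, q, some (min (c p) (c q))) else (p, q, none)

/-- Right-hand delayed simulation: `q` right-hand delayed simulates `p`. -/
def rhLe {S V : Type*} (Tr : S × V → V → (S × V) → Prop) (c : S × V → ℕ)
    (p q : S × V) : Prop :=
  DupWinsRh Tr c (rhInit c p q)

/-- Right-hand delayed simulation equivalence `≈^rh_de`. -/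
def rhEq {S V : Type*} (Tr : S × V → V → (S × V) → Prop) (c : S × V → ℕ)
    (p q : S × V) : Prop :=
  rhLe Tr c p q ∧ rhLe Tr c q p

/-- Min-parity acceptance for a sequence of colors: the minimal color occurring
infinitely often is even. -/
def MinParityAcc (cs : ℕ → ℕ) : Prop :=
  ∃ m, InfOften (fun i => cs i = m) ∧ (∀ m' < m, ¬ InfOften fun i => cs i = m') ∧ Even m

/-- A run of a parity game automaton is accepting iff it stays in the states `S × V`
and the minimal color seen infinitely often is even. -/
def PAcc {S V : Type*} (c : S × V → ℕ) (ρ : ℕ → GA S V) : Prop :=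
  ∃ σ : ℕ → S × V, (∀ i, ρ (i + 1) = Sum.inl (σ i)) ∧ MinParityAcc fun i => c (σ i)

/-- The ω-language of the (min-)parity game automaton `δ` with coloring `c`,
started in the state `q`. -/
def PALangFrom {S V : Type*} (δ : GA S V → V → GA S V) (c : S × V → ℕ)
    (q : GA S V) : Set (ℕ → V) :=
  {α | PAcc c (gaRun δ q α)}

/-- The transition relation (on `S × V`) of the deterministic game automaton `δ`. -/
def TrOf {S V : Type*} (δ : GA S V → V → GA S V) : S × V → V → (S × V) → Prop :=
  fun p a p' => δ (Sum.inl p) a = Sum.inl p'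

end Games
namespace Games

/-- Index Appearance Record memory: a permutation of the pair indices together with
two pointers `e` and `f`. -/
abbrev IARS (k : ℕ) := Equiv.Perm (Fin k) × Fin k × Fin k

open scoped Classical in
/-- The permutation update of the IAR construction: all indices `i_l` with `v ∈ E_{i_l}`
are shifted to the left (stably, i.e. preserving their relative order). -/
def IARshift {V : Type*} {k : ℕ} (Efam : Fin k → Set V) (v : V)
    (π π' : Equiv.Perm (Fin k)) : Prop :=
  List.ofFn (fun pos => π' pos) =
    (List.ofFn fun pos => π pos).filter (fun idx => decide (v ∈ Efam idx)) ++
      (List.ofFn fun pos => π pos).filter (fun idx => !decide (v ∈ Efam idx))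

/-- The edge relation of the parity game simulating a Streett game via Index Appearance
Records: the permutation is updated by the left shift, `e'` is the maximal (old) position
holding an index `i_l` with `v ∈ E_{i_l}`, and `f'` is the maximal (new) position holding
an index `i'_m` with `v ∈ F_{i'_m}`. -/
def IARE {V : Type*} {k : ℕ} (Efam Ffam : Fin k → Set V) (E : V → V → Prop) :
    IARS k × V → (IARS k × V) → Prop := fun p p' =>
  E p.2 p'.2 ∧
  IARshift Efam p.2 p.1.1 p'.1.1 ∧
  (p.2 ∈ Efam (p.1.1 p'.1.2.1) ∧ ∀ l, p.2 ∈ Efam (p.1.1 l) → l ≤ p'.1.2.1) ∧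
  (p.2 ∈ Ffam (p'.1.1 p'.1.2.2) ∧ ∀ m, p.2 ∈ Ffam (p'.1.1 m) → m ≤ p'.1.2.2)

/-- The coloring of the IAR parity game (max-parity convention, pointers read `1`-based):
`2e` if `e ≥ f`, and `2f − 1` if `e < f`. -/
def cIAR {V : Type*} {k : ℕ} : IARS k × V → ℕ := fun p =>
  if p.1.2.2 ≤ p.1.2.1 then 2 * (p.1.2.1.val + 1) else 2 * (p.1.2.2.val + 1) - 1

/-- The game graph of the parity game simulating a Streett game. -/
def IARGraph {V : Type*} {k : ℕ} (G : GameGraph V) (Efam Ffam : Fin k → Set V) :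
    GameGraph (IARS k × V) where
  E := IARE Efam Ffam G.E
  owner := fun p => G.owner p.2

/-- The Streett winning condition: for every pair, if `Inf(ρ)` meets `F_j` then it
also meets `E_j`. -/
def StreettWin {V J : Type*} (Efam Ffam : J → Set V) (ρ : ℕ → V) : Prop :=
  ∀ j : J, (InfSet ρ ∩ Ffam j).Nonempty → (InfSet ρ ∩ Efam j).Nonempty

/-- The (max-)parity winning condition: the maximal color of a vertex visited
infinitely often is even. -/
def MaxParityWin {α : Type*} (c : α → ℕ) (ρ : ℕ → α) : Prop :=
  ∃ m, m ∈ c '' InfSet ρ ∧ (∀ n ∈ c '' InfSet ρ, n ≤ m) ∧ Even m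

end Games
namespace Games

/-- The vertices of the Streett example graph `G_k` (Figure 3): Player 1's choice
positions `vv i` (with `vv 0 = v₁`), Player 1's choice vertices `av i b` (`b = false`:
the upper vertex, in `E_{-i} ∩ F_i`; `b = true`: the lower vertex, in `E_i ∩ F_{-i}`),
Player 0's choice positions `wv i` (with `wv 0 = w₁`), Player 0's choice vertices
`cv i b` (`b = false`: upper, in `E_i ∩ F_{-i}`; `b = true`: lower, in `E_{-i} ∩ F_i`),
and the vertices `x` and `y` (with an edge from `y` back to `v₁`). -/
inductive StV (k : ℕ) : Type
  | vv (i : Fin k)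
  | av (i : Fin k) (b : Bool)
  | wv (i : Fin k)
  | cv (i : Fin k) (b : Bool)
  | x
  | y
deriving DecidableEq

/-- The edges of the Streett example graph `G_k`. -/
def StE (k : ℕ) : StV k → StV k → Prop
  | .vv i, .av i' _ => i = i'
  | .av i _, .vv i' => i'.val = i.val + 1
  | .av i _, .wv i' => i.val = k - 1 ∧ i'.val = 0
  | .wv i, .cv i' _ => i = i'
  | .cv i _, .wv i' => i'.val = i.val + 1
  | .cv i _, .x => i.val = k - 1
  | .x, .y => True
  | .y, .vv i => i.val = 0
  | _, _ => False

/-- Vertex ownership in the Streett example graph. -/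
def StOwner (k : ℕ) : StV k → Bool
  | .vv _ => true
  | .av _ _ => true
  | _ => false

/-- The Streett example game graph `G_k`. -/
def StGraph (k : ℕ) : GameGraph (StV k) where
  E := StE k
  owner := StOwner k

/-- The sets `E_j` of the Streett condition `Ω_k`: index `2k` is the pair `(V, V)`;
index `2i` is the pair `(E_{i+1}, F_{i+1})` and index `2i+1` is `(E_{-(i+1)}, F_{-(i+1)})`.
The vertex `y` lies in every `E_j`. -/
def EStr (k : ℕ) : Fin (2 * k + 1) → Set (StV k) := fun j =>
  if h : j.val = 2 * k then Set.univ
  else {StV.av ⟨j.val / 2, by omega⟩ (!decide (j.val % 2 = 1)),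
        StV.cv ⟨j.val / 2, by omega⟩ (decide (j.val % 2 = 1)),
        StV.y}

/-- The sets `F_j` of the Streett condition `Ω_k`. -/
def FStr (k : ℕ) : Fin (2 * k + 1) → Set (StV k) := fun j =>
  if h : j.val = 2 * k then Set.univ
  else {StV.av ⟨j.val / 2, by omega⟩ (decide (j.val % 2 = 1)),
        StV.cv ⟨j.val / 2, by omega⟩ (!decide (j.val % 2 = 1))}

end Games
namespace Games

/-- `m` is the minimal (w.r.t. `le`) new memory content produced by `step` from some
`apx`-equivalent representative of the memory content `s` (the `s_min` of Definition 4). -/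
def MinRep {S V : Type*} (apx : S → S → Prop) (le : S → S → Prop)
    (step : S → V → V → S → Prop) (s : S) (v v' : V) (m : S) : Prop :=
  (∃ t, apx t s ∧ step t v v' m) ∧ ∀ m', (∃ t, apx t s ∧ step t v v' m') → le m m'

/-- The game graph of the automaton game `Γ''` obtained from the quotient automaton
`A/≈_S` (memory contents are `≈_S`-classes, transitions via minimal representatives). -/
def QuotGraph {S V : Type*} (G : GameGraph V) (apx : S → S → Prop) (le : S → S → Prop)
    (step : S → V → V → S → Prop) : GameGraph (Quot apx × V) where
  E := fun t t' => G.E t.2 t'.2 ∧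
    ∃ s m, Quot.mk apx s = t.1 ∧ MinRep apx le step s t.2 t'.2 m ∧ t'.1 = Quot.mk apx m
  owner := fun t => G.owner t.2

end Games
namespace Games

/-- The equivalence `≈_S` on memory contents derived from an equivalence `apxP`
on `S × V`: `s₁ ≈_S s₂` iff `(s₁, v) ≈ (s₂, v)` for all `v`. -/
def sApprox {S V : Type*} (apxP : S × V → (S × V) → Prop) : S → S → Prop :=
  fun s₁ s₂ => ∀ v : V, apxP (s₁, v) (s₂, v)

/-- The transition relation of the quotient game automaton `A/≈_S`: from `([s], v)` on
letter `v'` move to `([s_min], v')` where `s_min` is the minimal new memory content over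
all representatives (cf. Definition 4), from `q₀` move to `([s₀], v')`, and move to
`q_sink` on missing edges. -/
def quotSTrans {S V : Type*} (G : GameGraph V) (apx : S → S → Prop) (le : S → S → Prop)
    (step : S → V → V → S → Prop) (s0 : S) :
    (Quot apx × V) ⊕ Bool → V → ((Quot apx × V) ⊕ Bool) → Prop
  | Sum.inr false, a, t' => t' = Sum.inl (Quot.mk apx s0, a)
  | Sum.inr true, _, t' => t' = Sum.inr true
  | Sum.inl (t, v), a, t' =>
      (G.E v a ∧ ∃ s m, Quot.mk apx s = t ∧ MinRep apx le step s v a m ∧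
        t' = Sum.inl (Quot.mk apx m, a)) ∨
      (¬ G.E v a ∧ t' = Sum.inr true)

/-- The coloring of the quotient automaton `A/≈_S`:
`c'/≈_S([s], v) = min {c(s', v') | (s', v') ≈ (s, v)}`. -/
noncomputable def quotSColor {S V : Type*} (apxP : S × V → (S × V) → Prop)
    (c : S × V → ℕ) : Quot (sApprox apxP) × V → ℕ :=
  fun p => sInf {n | ∃ s, Quot.mk (sApprox apxP) s = p.1 ∧ ∃ q, apxP q (s, p.2) ∧ c q = n}

/-- The ω-language of the quotient parity game automaton `A/≈_S` (min-parity
acceptance). -/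
noncomputable def quotSPLang {S V : Type*} (G : GameGraph V)
    (apxP : S × V → (S × V) → Prop) (le : S → S → Prop)
    (step : S → V → V → S → Prop) (s0 : S) (c : S × V → ℕ) : Set (ℕ → V) :=
  {α | ∃ ρ : ℕ → (Quot (sApprox apxP) × V) ⊕ Bool, ρ 0 = Sum.inr false ∧
        (∀ i, quotSTrans G (sApprox apxP) le step s0 (ρ i) (α i) (ρ (i + 1))) ∧
        ∃ σ : ℕ → Quot (sApprox apxP) × V, (∀ i, ρ (i + 1) = Sum.inl (σ i)) ∧
          MinParityAcc fun i => quotSColor apxP c (σ i)}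

end Games
namespace Games

/-- The transition relation (on `S × V`, labelled by the `V`-component of the target)
of the parity game automaton of the IAR parity game `Γ'_k` simulating the Streett
example game `Γ_k`. -/
def stExTr (k : ℕ) : IARS (2 * k + 1) × StV k → StV k → (IARS (2 * k + 1) × StV k) → Prop :=
  fun p a p' => IARE (EStr k) (FStr k) (StE k) p p' ∧ p'.2 = a

/-- The coloring of the parity game automaton of `Γ'_k`, redefined as `4k + 2 − c_k`
so that the min-parity convention applies. -/
def stExColor (k : ℕ) : IARS (2 * k + 1) × StV k → ℕ :=
  fun p => (4 * k + 2) - cIAR p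

/-- Auxiliary rank function on the Streett example graph, strictly decreasing
along every edge except those leaving `y`. -/
def stRank (k : ℕ) : StV k → ℕ
  | .vv i => 2 * (k - i.val) + 2 * k + 2
  | .av i _ => 2 * (k - i.val) + 2 * k + 1
  | .wv i => 2 * (k - i.val) + 1
  | .cv i _ => 2 * (k - i.val)
  | .x => 1
  | .y => 0

lemma stRank_decr {k : ℕ} (u u' : StV k) (h : StE k u u') (hne : u ≠ StV.y) :
    stRank k u' < stRank k u := by
  cases u <;> cases u' <;> simp only [StE] at h <;>
    first
      | exact h.elim
      | (exact absurd rfl hne)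
      | (rename_i i b i' b'
         first
           | (have hi := i.isLt; have hi' := i'.isLt
              simp only [stRank]
              first
                | (cases h; omega)
                | (obtain ⟨h1, h2⟩ := h; omega)
                | omega))
      | (rename_i i i'
         have hi := i.isLt; have hi' := i'.isLt
         simp only [stRank]
         first
           | (cases h; omega)
           | (obtain ⟨h1, h2⟩ := h; omega)
           | omega)
      | (rename_i i b i'
         have hi := i.isLt; have hi' := i'.isLt
         simp only [stRank]
         first
           | (cases h; omega)
           | (obtain ⟨h1, h2⟩ := h; omega)
           | omega)
      | (rename_i i i' b
         have hi := i.isLt; have hi' := i'.isLt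
         simp only [stRank]
         first
           | (cases h; omega)
           | (obtain ⟨h1, h2⟩ := h; omega)
           | omega)
      | (rename_i i b
         have hi := i.isLt
         simp only [stRank]; omega)
      | (rename_i i
         have hi := i.isLt
         simp only [stRank]; omega)
      | (simp only [stRank]; omega)

lemma visits_y {k : ℕ} (ρ : ℕ → StV k) (h : ∀ i, StE k (ρ i) (ρ (i + 1))) (n : ℕ) :
    ∃ m, n ≤ m ∧ ρ m = StV.y := by
  have key : ∀ r n, stRank k (ρ n) ≤ r → ∃ m, n ≤ m ∧ ρ m = StV.y := by
    intro r
    induction r with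
    | zero =>
      intro n hn
      by_cases hy : ρ n = StV.y
      · exact ⟨n, le_refl n, hy⟩
      · have := stRank_decr _ _ (h n) hy
        omega
    | succ r ih =>
      intro n hn
      by_cases hy : ρ n = StV.y
      · exact ⟨n, le_refl n, hy⟩
      · have hd := stRank_decr _ _ (h n) hy
        obtain ⟨m, hm, hmy⟩ := ih (n + 1) (by omega)
        exact ⟨m, by omega, hmy⟩
  exact key (stRank k (ρ n)) n le_rfl

lemma pm_zero_zero (o : Option ℕ) : pm 0 0 o = none := by
  have h : ¬ rewardLt 0 0 := fun h => h.2 rfl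
  cases o with
  | none => simp [pm, h]
  | some c => simp [pm, h, Nat.odd_iff, Nat.even_iff]

lemma y_mem_EStr {k : ℕ} (j : Fin (2 * k + 1)) : StV.y ∈ EStr k j := by
  unfold EStr
  split
  · exact Set.mem_univ _
  · simp

lemma color_after_y {k : ℕ} (p p' : IARS (2 * k + 1) × StV k)
    (h : IARE (EStr k) (FStr k) (StE k) p p') (hy : p.2 = StV.y) :
    stExColor k p' = 0 := by
  obtain ⟨hE, hsh, ⟨he1, he2⟩, hf⟩ := h
  have htop : (⟨2 * k, by omega⟩ : Fin (2 * k + 1)) ≤ p'.1.2.1 := by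
    apply he2
    rw [hy]
    exact y_mem_EStr _
  have hval : p'.1.2.1.val = 2 * k := by
    have h1 := p'.1.2.1.isLt
    have h2 : (2 * k : ℕ) ≤ p'.1.2.1.val := htop
    omega
  have hle : p'.1.2.2 ≤ p'.1.2.1 := by
    rw [Fin.le_def, hval]
    have := p'.1.2.2.isLt
    omega
  have hc : cIAR p' = 4 * k + 2 := by
    simp only [cIAR, if_pos hle, hval]
    omega
  simp [stExColor, hc]

lemma dup_wins_everywhere {k : ℕ} (p : RhPos (IARS (2 * k + 1)) (StV k)) :
    DupWinsRh (stExTr k) (stExColor k) p := by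
  intro π h0 hstep n
  have hpath : ∀ i, StE k ((π i).1.2) ((π (i + 1)).1.2) := by
    intro i
    obtain ⟨a, h1, h2, h3⟩ := hstep i
    exact h1.1.1
  have hsecond : ∀ i, (π (i + 1)).2.1.2 = (π (i + 1)).1.2 := by
    intro i
    obtain ⟨a, h1, h2, h3⟩ := hstep i
    rw [h1.2, h2.2]
  obtain ⟨m, hm, hy⟩ := visits_y (fun i => (π i).1.2) hpath (n + 1)
  obtain ⟨a, h1, h2, h3⟩ := hstep m
  have c1 : stExColor k (π (m + 1)).1 = 0 := color_after_y _ _ h1.1 hy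
  have hy2 : (π m).2.1.2 = StV.y := by
    have hm1 : m - 1 + 1 = m := by omega
    have := hsecond (m - 1)
    rw [hm1] at this
    rw [this]
    exact hy
  have c2 : stExColor k (π (m + 1)).2.1 = 0 := color_after_y _ _ h2.1 hy2
  refine ⟨m + 1, by omega, ?_⟩
  show (π (m + 1)).2.2 = none
  rw [h3, c1, c2, pm_zero_zero]

/-- Theorem 3(2) of the paper. For the Streett example game `Γ_k`
and its simulating IAR parity game `Γ'_k`, the memory-reduction algorithm yields a
single memory content: Duplicator wins the right-hand delayed simulation game from
every vertex, all states of the parity game automaton with the same `V`-component are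
`≈^rh_de`-equivalent, all memory contents are `≈_S`-equivalent, and `S/≈_S` is a
singleton. -/
theorem streett_example_memory_reduction_singleton {k : ℕ} (hk : 0 < k) :
    (∀ p : RhPos (IARS (2 * k + 1)) (StV k), DupWinsRh (stExTr k) (stExColor k) p) ∧
    (∀ (s₁ s₂ : IARS (2 * k + 1)) (v : StV k),
      rhEq (stExTr k) (stExColor k) (s₁, v) (s₂, v)) ∧
    (∀ s₁ s₂ : IARS (2 * k + 1), sApprox (rhEq (stExTr k) (stExColor k)) s₁ s₂) ∧
    (∀ t₁ t₂ : Quot (sApprox (rhEq (stExTr k) (stExColor k))), t₁ = t₂) := by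
  refine ⟨dup_wins_everywhere, ?_, ?_, ?_⟩
  · intro s₁ s₂ v
    exact ⟨dup_wins_everywhere _, dup_wins_everywhere _⟩
  · intro s₁ s₂ v
    exact ⟨dup_wins_everywhere _, dup_wins_everywhere _⟩
  · intro t₁ t₂
    induction t₁ using Quot.ind with
    | _ s₁ =>
      induction t₂ using Quot.ind with
      | _ s₂ =>
        exact Quot.sound fun v => ⟨dup_wins_everywhere _, dup_wins_everywhere _⟩

end Games
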